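/- Let n ≥ 2 be an integer, let q be a real number with 0 < q < 1, and let ν ∈ Λ_n be a partition with ν_n = 0. Then 𝔰_ν(q^{2(ν+δ)}; q²) = q^{2|ν|} · 𝔰_{ν'}(q^{2(ν'+δ')}; q²), where ν' = (ν_1, …, ν_{n−1}) ∈ Λ_{n−1}, δ' = (n−2, n−3, …, 1, 0), and q^{2(ν'+δ')} denotes the point (q^{2(ν_1+n−2)}, q^{2(ν_2+n−3)}, …, q^{2ν_{n−1}}) in n−1 variables. -/

import Mathlib

open BigOperators Finset

/-- The q-factorial Schur polynomial `𝔰_ν(x; q)` evaluated at a point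
`x = (x_1, …, x_n)` (with pairwise distinct coordinates):
`det( ∏_{m=0}^{ν_j+n−j−1} (x_i − q^m) ) / ∏_{i<j} (x_i − x_j)`.
Here indices are 0-based, so the number of factors in the `j`-th column
is `ν j + (n - 1 - j)`. -/
noncomputable def qfactSchur (n : ℕ) (q : ℝ) (ν : Fin n → ℕ) (x : Fin n → ℝ) : ℝ :=
  (Matrix.det (Matrix.of fun i j : Fin n =>
      ∏ m ∈ Finset.range (ν j + (n - 1 - (j : ℕ))), (x i - q ^ m))) /
    ∏ i : Fin n, ∏ j ∈ Finset.Ioi i, (x i - x j)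

/-- The interpolation point `q^{2(ν+δ)} = (q^{2(ν_1+n−1)}, …, q^{2ν_n})`. -/
noncomputable def qPoint (n : ℕ) (q : ℝ) (ν : Fin n → ℕ) : Fin n → ℝ :=
  fun i => q ^ (2 * (ν i + (n - 1 - (i : ℕ))))

/-! At `x = q^{2(ν+δ)}` with `ν_n = 0` the last coordinate is `x_n = 1 = (q²)^0`, so every column
`j < n` of the alternant has the factor `x_i - 1`, which vanishes in the last row; the
determinant is therefore its top-left minor. The remaining coordinates are `x_i = q² x'_i`, so the
identity `q²x - q^{2(l+1)} = q²(x - q^{2l})` pulls `(q²x'_i - 1)` out of row `i` and a power of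
`q²` out of every column, leaving the alternant at `x'`. The denominator factors the same way,
and everything cancels except `(q²)^{|ν|}`. -/

theorem Fin.prod_Ioi_castSucc {M : Type*} [CommMonoid M] {m : ℕ} (f : Fin (m + 1) → M)
    (i : Fin m) : ∏ j ∈ Ioi i.castSucc, f j = (∏ j ∈ Ioi i, f j.castSucc) * f (Fin.last m) := by
  rw [← Finset.Ioc_top, Fin.top_eq_last, ← Finset.Ioo_insert_right (Fin.castSucc_lt_last i),
    ← Fin.map_castSuccEmb_Ioi, prod_insert (by simp), prod_map, mul_comm]
  rfl

section

variable {R : Type*} [CommRing R]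

theorem Matrix.det_eq_det_submatrix_castSucc_of_last_row {m : ℕ}
    (A : Matrix (Fin (m + 1)) (Fin (m + 1)) R) (h : A (Fin.last m) = Pi.single (Fin.last m) 1) :
    A.det = (A.submatrix Fin.castSucc Fin.castSucc).det := by
  rw [Matrix.det_succ_row A (Fin.last m), Fintype.sum_eq_single (Fin.last m)]
  · simp [h]
  · intro j hj
    simp [h, hj]

theorem Finset.prod_range_succ_mul_sub_pow (t y : R) (k : ℕ) :
    ∏ l ∈ range (k + 1), (t * y - t ^ l) =
      (t * y - 1) * (t ^ k * ∏ l ∈ range k, (y - t ^ l)) := by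
  rw [prod_range_succ', pow_zero, mul_comm]
  simp [pow_succ', ← mul_sub, prod_mul_distrib]

def diffProd {n : ℕ} (x : Fin n → R) : R :=
  ∏ i, ∏ j ∈ Ioi i, (x i - x j)

theorem diffProd_snoc {m : ℕ} (x : Fin m → R) (a : R) :
    diffProd (Fin.snoc x a : Fin (m + 1) → R) = (∏ i, (x i - a)) * diffProd x := by
  have hlast : Ioi (Fin.last m) = ∅ := by rw [← Fin.top_eq_last, Finset.Ioi_top]
  simp [diffProd, Fin.prod_univ_castSucc, Fin.prod_Ioi_castSucc, prod_mul_distrib, hlast, mul_comm]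

theorem diffProd_const_mul {m : ℕ} (t : R) (y : Fin m → R) :
    diffProd (fun i => t * y i) = t ^ (∑ i : Fin m, (m - 1 - i : ℕ)) * diffProd y := by
  simp [diffProd, ← mul_sub, prod_mul_distrib, prod_pow_eq_pow_sum, Fin.card_Ioi]

def qfactMatrix (n : ℕ) (t : R) (ν : Fin n → ℕ) (x : Fin n → R) : Matrix (Fin n) (Fin n) R :=
  Matrix.of fun i j => ∏ l ∈ range (ν j + (n - 1 - (j : ℕ))), (x i - t ^ l)

variable {m : ℕ} (t : R) (ν : Fin m → ℕ) (y : Fin m → R)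

theorem qfactMatrix_snoc_one_last_row :
    qfactMatrix (m + 1) t (Fin.snoc ν 0) (Fin.snoc y 1) (Fin.last m) =
      Pi.single (Fin.last m) 1 := by
  funext j
  induction j using Fin.lastCases with
  | last => simp [qfactMatrix]
  | cast j =>
    rw [Pi.single_eq_of_ne (Fin.castSucc_lt_last j).ne]
    exact prod_eq_zero (i := 0) (mem_range.2 (by simp)) (by simp)

theorem qfactMatrix_snoc_one_submatrix :
    (qfactMatrix (m + 1) t (Fin.snoc ν 0) (Fin.snoc (fun i => t * y i) 1)).submatrix
        Fin.castSucc Fin.castSucc =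
      Matrix.diagonal (fun i => t * y i - 1) * qfactMatrix m t ν y *
        Matrix.diagonal (fun j => t ^ (ν j + (m - 1 - (j : ℕ)))) := by
  ext i j
  have hj : ν j + (m - (j : ℕ)) = ν j + (m - 1 - (j : ℕ)) + 1 := by omega
  simp [qfactMatrix, Matrix.diagonal_mul, Matrix.mul_diagonal, hj, prod_range_succ_mul_sub_pow]
  ring

theorem det_qfactMatrix_snoc_one :
    (qfactMatrix (m + 1) t (Fin.snoc ν 0) (Fin.snoc (fun i => t * y i) 1)).det =
      (∏ i, (t * y i - 1)) * (qfactMatrix m t ν y).det *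
        t ^ (∑ j : Fin m, (ν j + (m - 1 - (j : ℕ)))) := by
  rw [Matrix.det_eq_det_submatrix_castSucc_of_last_row _ (qfactMatrix_snoc_one_last_row ..),
    qfactMatrix_snoc_one_submatrix, Matrix.det_mul, Matrix.det_mul, Matrix.det_diagonal,
    Matrix.det_diagonal, prod_pow_eq_pow_sum]

end

theorem qfactSchur_eq_det_div_diffProd (n : ℕ) (q : ℝ) (ν : Fin n → ℕ) (x : Fin n → ℝ) :
    qfactSchur n q ν x = (qfactMatrix n q ν x).det / diffProd x :=
  rfl

theorem qfactSchur_snoc_one {m : ℕ} {t : ℝ} (ht : t ≠ 0) (ν : Fin m → ℕ) (y : Fin m → ℝ)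
    (hy : ∀ i, t * y i ≠ 1) :
    qfactSchur (m + 1) t (Fin.snoc ν 0) (Fin.snoc (fun i => t * y i) 1) =
      t ^ (∑ i, ν i) * qfactSchur m t ν y := by
  have hP : ∏ i, (t * y i - 1) ≠ 0 := prod_ne_zero_iff.2 fun i _ => sub_ne_zero.2 (hy i)
  have hδ : t ^ ∑ i : Fin m, (m - 1 - (i : ℕ)) ≠ 0 := pow_ne_zero _ ht
  rw [qfactSchur_eq_det_div_diffProd, qfactSchur_eq_det_div_diffProd, det_qfactMatrix_snoc_one,
    diffProd_snoc, diffProd_const_mul, sum_add_distrib, pow_add, mul_assoc,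
    mul_div_mul_left _ _ hP, mul_comm (t ^ _) (diffProd y), ← mul_assoc, mul_div_mul_right _ _ hδ]
  ring

/-- for a partition `ν ∈ Λ_n` (with `n ≥ 2`) such that `ν_n = 0`,
`𝔰_ν(q^{2(ν+δ)}; q²) = q^{2|ν|} · 𝔰_{ν'}(q^{2(ν'+δ')}; q²)`, where
`ν' = (ν_1, …, ν_{n−1}) ∈ Λ_{n−1}`. -/
theorem qfactSchur_self_reduce (n : ℕ) (hn : 2 ≤ n) (q : ℝ) (hq0 : 0 < q) (hq1 : q < 1)
    (ν : Fin n → ℕ) (hlast : ν ⟨n - 1, by omega⟩ = 0) :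
    qfactSchur n (q ^ 2) ν (qPoint n q ν) =
      q ^ (2 * ∑ i, ν i) *
        qfactSchur (n - 1) (q ^ 2) (fun i => ν (Fin.castLE (by omega) i))
          (qPoint (n - 1) q (fun i => ν (Fin.castLE (by omega) i))) := by
  obtain ⟨m, rfl⟩ : ∃ m, n = m + 1 := ⟨n - 1, by omega⟩
  replace hlast : ν (Fin.last m) = 0 := hlast
  have hν : Fin.snoc (Fin.init ν) 0 = ν := hlast ▸ Fin.snoc_init_self ν
  have hx : Fin.snoc (fun i => q ^ 2 * qPoint m q (Fin.init ν) i) 1 = qPoint (m + 1) q ν := by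
    funext i
    induction i using Fin.lastCases with
    | last => simp [qPoint, hlast]
    | cast i =>
      simp only [Fin.snoc_castSucc, qPoint, Fin.init, Fin.val_castSucc, ← pow_add]
      congr 1
      omega
  have hy (i : Fin m) : q ^ 2 * qPoint m q (Fin.init ν) i ≠ 1 := by
    rw [qPoint, ← pow_add]
    exact (pow_lt_one₀ hq0.le hq1 (by omega)).ne
  have key := qfactSchur_snoc_one (pow_ne_zero 2 hq0.ne') (Fin.init ν) _ hy
  rw [hν, hx] at key
  rw [key, pow_mul, Fin.sum_univ_castSucc, hlast, add_zero]
  rfl
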